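/- Let G be a Gauss diagram that can be transformed by a finite sequence of crossing changes into a Gauss diagram G' whose writhe polynomial vanishes, W_{G'}(t) = 0. Then (1/2)·∑_{k ∈ ℤ∖{0}} |J_k(G)| = ∑_{k > 0} |J_k(G)| = ∑_{k < 0} |J_k(G)|. -/

import Mathlib

open scoped Classical

/-- A Gauss diagram with `n` chords: the `2n` marked points live on the cyclic group
`ZMod (2*n)` (the oriented circle); each chord `i` is the ordered pair
`(tail i, head i)` of marked points and carries a sign (writhe) `sign i ∈ {+1, -1}`;
all `2n` endpoints are distinct. -/
structure GaussDiagram (n : ℕ) where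
  tail : Fin n → ZMod (2 * n)
  head : Fin n → ZMod (2 * n)
  sign : Fin n → ℤ
  sign_mem : ∀ i, sign i = 1 ∨ sign i = -1
  endpoints_inj : Function.Injective
    (fun p : Fin n × Bool => if p.2 then head p.1 else tail p.1)

namespace GaussDiagram

variable {n : ℕ}

/-- `x` lies on the open arc running in the circle's orientation from `a` to `b`. -/
def arcMem (a b x : ZMod (2 * n)) : Prop :=
  0 < (x - a).val ∧ (x - a).val < (b - a).val

/-- `x` lies on the open oriented arc from the tail to the head of chord `i`. -/
def inArc (G : GaussDiagram n) (i : Fin n) (x : ZMod (2 * n)) : Prop :=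
  arcMem (G.tail i) (G.head i) x

/-- Chords `i` and `j` are linked: exactly one endpoint of `j` lies on the open
oriented arc from the tail to the head of `i`. -/
def linked (G : GaussDiagram n) (i j : Fin n) : Prop :=
  Xor' (G.inArc i (G.tail j)) (G.inArc i (G.head j))

/-- Chord `j` crosses chord `i` from right to left. -/
def crossesRL (G : GaussDiagram n) (i j : Fin n) : Prop :=
  G.linked i j ∧ G.inArc i (G.head j)

/-- Chord `j` crosses chord `i` from left to right. -/
def crossesLR (G : GaussDiagram n) (i j : Fin n) : Prop :=
  G.linked i j ∧ G.inArc i (G.tail j)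

/-- The index of the chord `i`: `Ind(i) = r₊ − r₋ − l₊ + l₋`. -/
noncomputable def ind (G : GaussDiagram n) (i : Fin n) : ℤ :=
  ((Finset.univ.filter fun j => G.crossesRL i j ∧ G.sign j = 1).card : ℤ)
    - ((Finset.univ.filter fun j => G.crossesRL i j ∧ G.sign j = -1).card : ℤ)
    - ((Finset.univ.filter fun j => G.crossesLR i j ∧ G.sign j = 1).card : ℤ)
    + ((Finset.univ.filter fun j => G.crossesLR i j ∧ G.sign j = -1).card : ℤ)

/-- The `k`-th writhe `J_k(G)`: the number of positive chords of index `k` minus the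
number of negative chords of index `k`. -/
noncomputable def J (G : GaussDiagram n) (k : ℤ) : ℤ :=
  ((Finset.univ.filter fun i => G.ind i = k ∧ G.sign i = 1).card : ℤ)
    - ((Finset.univ.filter fun i => G.ind i = k ∧ G.sign i = -1).card : ℤ)

/-- The writhe polynomial `W_G(t) = ∑_{Ind(c) ≠ 0} w(c) t^{Ind(c)} = ∑_{k ≠ 0} J_k(G) t^k`. -/
noncomputable def writhePoly (G : GaussDiagram n) : LaurentPolynomial ℤ :=
  ∑ i ∈ Finset.univ.filter (fun i => G.ind i ≠ 0),
    LaurentPolynomial.C (G.sign i) * LaurentPolynomial.T (G.ind i)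

/-- The odd writhe `J(G) = ∑_{c ∈ Odd(G)} w(c)`. -/
noncomputable def oddWrithe (G : GaussDiagram n) : ℤ :=
  ∑ i ∈ Finset.univ.filter (fun i => Odd (G.ind i)), G.sign i

/-- `G'` is obtained from `G` by a crossing change at the chord `c`: the tail and head
of `c` are interchanged and its sign is negated, all other chords being unchanged. -/
def IsCrossingChangeAt (G G' : GaussDiagram n) (c : Fin n) : Prop :=
  G'.tail c = G.head c ∧ G'.head c = G.tail c ∧ G'.sign c = -G.sign c ∧
    ∀ j : Fin n, j ≠ c →
      G'.tail j = G.tail j ∧ G'.head j = G.head j ∧ G'.sign j = G.sign j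

/-- `G'` is obtained from `G` by a crossing change (at some chord). -/
def IsCrossingChange (G G' : GaussDiagram n) : Prop :=
  ∃ c, IsCrossingChangeAt G G' c

/-- `G'` is obtained from `G` by a sequence of `m` crossing changes. -/
def ChangedBy (m : ℕ) (G G' : GaussDiagram n) : Prop :=
  ∃ f : ℕ → GaussDiagram n, f 0 = G ∧ f m = G' ∧
    ∀ i < m, IsCrossingChange (f i) (f (i + 1))

end GaussDiagram

/-!
A crossing change at a chord `c` leaves the index of every other chord unchanged and negates
both the index and the sign of `c`. Hence each difference `J_k - J_{-k}` is invariant under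
crossing changes. It vanishes on `G'` for `k ≠ 0` because `W_{G'} = 0`, so `J_{-k}(G) = J_k(G)`
for all `k`, and the sums of `|J_k(G)|` over positive and over negative `k` agree.
-/

theorem ZMod.val_sub_lt_val_neg_iff {N : ℕ} [NeZero N] {u v : ZMod N} (hv : v ≠ 0) :
    (u - v).val < (-v).val ↔ v.val ≤ u.val := by
  have hv0 : v.val ≠ 0 := (ZMod.val_ne_zero v).2 hv
  rw [ZMod.neg_val, if_neg hv]
  rcases le_or_gt v.val u.val with h | h
  · have := ZMod.val_lt u
    rw [ZMod.val_sub h]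
    omega
  · have hvu : v - u ≠ 0 := sub_ne_zero.2 fun e => h.ne' (congrArg ZMod.val e)
    rw [← neg_sub, ZMod.neg_val, if_neg hvu, ZMod.val_sub h.le]
    omega

section EvenFunction

variable {α M : Type*} [AddCommGroup α] [LinearOrder α] [IsOrderedAddMonoid α]
  [AddCommMonoid M] {f : α → M}

theorem Function.Even.finsum_neg_eq_finsum_pos (hf : f.Even) :
    ∑ᶠ (k : α) (_ : k < 0), f k = ∑ᶠ (k : α) (_ : 0 < k), f k :=
  finsum_mem_eq_of_bijOn (s := Set.Iio 0) (t := Set.Ioi 0) Neg.neg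
    ⟨fun _ hk => neg_pos.2 hk, neg_injective.injOn,
      fun k hk => ⟨-k, neg_neg_iff_pos.2 hk, neg_neg k⟩⟩
    fun k _ => (hf k).symm

theorem Function.Even.finsum_ne_zero_eq_two_nsmul (hf : f.Even) (hfin : (support f).Finite) :
    ∑ᶠ (k : α) (_ : k ≠ 0), f k = 2 • ∑ᶠ (k : α) (_ : 0 < k), f k := by
  have hsplit : {k : α | k ≠ 0} = Set.Iio 0 ∪ Set.Ioi 0 := by
    ext k
    exact lt_or_lt_iff_ne.symm
  calc ∑ᶠ (k : α) (_ : k ≠ 0), f k = ∑ᶠ k ∈ Set.Iio 0 ∪ Set.Ioi 0, f k := by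
        rw [← hsplit]
        rfl
    _ = ∑ᶠ (k : α) (_ : k < 0), f k + ∑ᶠ (k : α) (_ : 0 < k), f k :=
        finsum_mem_union' Set.Ioi_disjoint_Iio_same.symm (hfin.inter_of_right _)
          (hfin.inter_of_right _)
    _ = 2 • ∑ᶠ (k : α) (_ : 0 < k), f k := by
        rw [hf.finsum_neg_eq_finsum_pos, two_nsmul]

end EvenFunction

namespace GaussDiagram

open Finset

variable {n : ℕ}

theorem arcMem_swap_iff [NeZero (2 * n)] {a b x : ZMod (2 * n)} (hab : a ≠ b) (hxa : x ≠ a)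
    (hxb : x ≠ b) : arcMem b a x ↔ ¬ arcMem a b x := by
  have hx : x - b = (x - a) - (b - a) := by ring
  have hb : a - b = -(b - a) := by ring
  unfold arcMem
  rw [hx, hb, ZMod.val_sub_lt_val_neg_iff (sub_ne_zero.2 hab.symm), ← hx, ZMod.val_pos,
    ZMod.val_pos, sub_ne_zero, sub_ne_zero]
  simp only [hxa, hxb, ne_eq, not_false_eq_true, true_and, not_lt]

section Endpoints

variable (G : GaussDiagram n)

theorem tail_ne_head (i j : Fin n) : G.tail i ≠ G.head j := fun h => by
  simpa using G.endpoints_inj (a₁ := (i, false)) (a₂ := (j, true)) (by simpa using h)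

theorem tail_injective : Function.Injective G.tail := fun i j h => by
  simpa using G.endpoints_inj (a₁ := (i, false)) (a₂ := (j, false)) (by simpa using h)

theorem head_injective : Function.Injective G.head := fun i j h => by
  simpa using G.endpoints_inj (a₁ := (i, true)) (a₂ := (j, true)) (by simpa using h)

theorem not_inArc_tail (i : Fin n) : ¬ G.inArc i (G.tail i) := by
  simp [inArc, arcMem]

theorem not_inArc_head (i : Fin n) : ¬ G.inArc i (G.head i) := by
  simp [inArc, arcMem]

end Endpoints

theorem linked_iff (G : GaussDiagram n) (i j : Fin n) :
    G.linked i j ↔ G.inArc i (G.tail j) ∧ ¬ G.inArc i (G.head j)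
      ∨ G.inArc i (G.head j) ∧ ¬ G.inArc i (G.tail j) :=
  Iff.rfl

theorem sum_ite_sign (G : GaussDiagram n) (p : Fin n → Prop) [DecidablePred p] :
    (∑ j, if p j then G.sign j else 0)
      = (#{j | p j ∧ G.sign j = 1} : ℤ) - #{j | p j ∧ G.sign j = -1} := by
  simp only [natCast_card_filter, ← sum_sub_distrib]
  refine sum_congr rfl fun j _ => ?_
  rcases G.sign_mem j with h | h <;> by_cases hp : p j <;> simp [h, hp]

theorem J_eq_sum (G : GaussDiagram n) (k : ℤ) :
    G.J k = ∑ i, if G.ind i = k then G.sign i else 0 :=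
  (G.sum_ite_sign (G.ind · = k)).symm

/-- The contribution of chord `j` to `Ind(i)`. A chord not linked with `i` has both or none
of its endpoints on the arc of `i`, so the two terms cancel. -/
noncomputable def indTerm (G : GaussDiagram n) (i j : Fin n) : ℤ :=
  (if G.inArc i (G.head j) then G.sign j else 0) - (if G.inArc i (G.tail j) then G.sign j else 0)

theorem ind_eq_sum_indTerm (G : GaussDiagram n) (i : Fin n) :
    G.ind i = ∑ j, G.indTerm i j := by
  calc G.ind i = (∑ j, if G.crossesRL i j then G.sign j else 0)
        - ∑ j, if G.crossesLR i j then G.sign j else 0 := by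
        rw [sum_ite_sign, sum_ite_sign, ind]
        ring
    _ = ∑ j, G.indTerm i j := by
        rw [← sum_sub_distrib]
        refine sum_congr rfl fun j _ => ?_
        by_cases ht : G.inArc i (G.tail j) <;> by_cases hh : G.inArc i (G.head j) <;>
          simp [indTerm, crossesRL, crossesLR, linked_iff, ht, hh]

theorem indTerm_self (G : GaussDiagram n) (i : Fin n) : G.indTerm i i = 0 := by
  simp only [indTerm, if_neg (G.not_inArc_tail i), if_neg (G.not_inArc_head i), sub_self]

namespace IsCrossingChangeAt

variable {G G' : GaussDiagram n} {c : Fin n}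

theorem inArc_of_ne (hc : G.IsCrossingChangeAt G' c) {i : Fin n} (hi : i ≠ c)
    (x : ZMod (2 * n)) : G'.inArc i x ↔ G.inArc i x := by
  obtain ⟨ht, hh, -⟩ := hc.2.2.2 i hi
  rw [inArc, inArc, ht, hh]

theorem inArc_iff_not (hc : G.IsCrossingChangeAt G' c) {x : ZMod (2 * n)}
    (hxt : x ≠ G.tail c) (hxh : x ≠ G.head c) : G'.inArc c x ↔ ¬ G.inArc c x := by
  have : NeZero (2 * n) := ⟨by have := c.pos; omega⟩
  rw [inArc, inArc, hc.1, hc.2.1]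
  exact arcMem_swap_iff (G.tail_ne_head c c) hxt hxh

theorem indTerm_of_ne (hc : G.IsCrossingChangeAt G' c) {i : Fin n} (hi : i ≠ c) (j : Fin n) :
    G'.indTerm i j = G.indTerm i j := by
  have harc := hc.inArc_of_ne hi
  obtain ⟨ht, hh, hs, hother⟩ := hc
  rcases eq_or_ne j c with rfl | hj
  · simp only [indTerm, ht, hh, hs, harc]
    split_ifs <;> ring
  · obtain ⟨htj, hhj, hsj⟩ := hother j hj
    simp only [indTerm, htj, hhj, hsj, harc]

theorem indTerm_self (hc : G.IsCrossingChangeAt G' c) (j : Fin n) :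
    G'.indTerm c j = -G.indTerm c j := by
  rcases eq_or_ne j c with rfl | hj
  · rw [G.indTerm_self, G'.indTerm_self, neg_zero]
  obtain ⟨htj, hhj, hsj⟩ := hc.2.2.2 j hj
  have htail := hc.inArc_iff_not (fun h => hj (G.tail_injective h)) (G.tail_ne_head j c)
  have hhead := hc.inArc_iff_not (fun h => G.tail_ne_head c j h.symm)
    (fun h => hj (G.head_injective h))
  simp only [indTerm, htj, hhj, hsj, htail, hhead]
  split_ifs <;> ring

theorem ind_of_ne (hc : G.IsCrossingChangeAt G' c) {i : Fin n} (hi : i ≠ c) :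
    G'.ind i = G.ind i := by
  simp only [ind_eq_sum_indTerm, hc.indTerm_of_ne hi]

theorem ind_self (hc : G.IsCrossingChangeAt G' c) : G'.ind c = -G.ind c := by
  simp only [ind_eq_sum_indTerm, hc.indTerm_self, sum_neg_distrib]

theorem J_sub_J_neg (hc : G.IsCrossingChangeAt G' c) (k : ℤ) :
    G'.J k - G'.J (-k) = G.J k - G.J (-k) := by
  simp only [J_eq_sum, ← sum_sub_distrib]
  refine sum_congr rfl fun i _ => ?_
  rcases eq_or_ne i c with rfl | hi
  · rw [hc.ind_self, hc.2.2.1]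
    split_ifs <;> omega
  · rw [hc.ind_of_ne hi, (hc.2.2.2 i hi).2.2]

end IsCrossingChangeAt

theorem ChangedBy.J_sub_J_neg {m : ℕ} {G G' : GaussDiagram n} (h : ChangedBy m G G') (k : ℤ) :
    G'.J k - G'.J (-k) = G.J k - G.J (-k) := by
  obtain ⟨f, rfl, rfl, hstep⟩ := h
  suffices ∀ i ≤ m, (f i).J k - (f i).J (-k) = (f 0).J k - (f 0).J (-k) from this m le_rfl
  intro i hi
  induction i with
  | zero => rfl
  | succ i ih =>
    obtain ⟨c, hc⟩ := hstep i hi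
    rw [hc.J_sub_J_neg, ih (by omega)]

theorem coeff_writhePoly (G : GaussDiagram n) {k : ℤ} (hk : k ≠ 0) :
    G.writhePoly.coeff k = G.J k := by
  simp only [writhePoly, ← LaurentPolynomial.single_eq_C_mul_T, AddMonoidAlgebra.coeff_sum,
    Finsupp.finsetSum_apply, AddMonoidAlgebra.coeff_single, Finsupp.single_apply, J_eq_sum]
  exact sum_filter_of_ne fun i _ hne hi0 => hne (if_neg fun hik : G.ind i = k => hk (hik ▸ hi0))

theorem J_eq_zero_of_writhePoly_eq_zero {G : GaussDiagram n} (h : G.writhePoly = 0) {k : ℤ}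
    (hk : k ≠ 0) : G.J k = 0 := by
  rw [← G.coeff_writhePoly hk, h]
  rfl

theorem ChangedBy.J_neg_eq {m : ℕ} {G G' : GaussDiagram n} (h : ChangedBy m G G')
    (h0 : G'.writhePoly = 0) (k : ℤ) : G.J (-k) = G.J k := by
  rcases eq_or_ne k 0 with rfl | hk
  · rw [neg_zero]
  have := h.J_sub_J_neg k
  rw [J_eq_zero_of_writhePoly_eq_zero h0 hk,
    J_eq_zero_of_writhePoly_eq_zero h0 (neg_ne_zero.2 hk)] at this
  omega

theorem support_J_subset_range_ind (G : GaussDiagram n) :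
    Function.support G.J ⊆ Set.range G.ind := fun k hk =>
  by_contra fun hnot => hk <| (G.J_eq_sum k).trans <|
    sum_eq_zero fun i _ => if_neg fun h => hnot ⟨i, h⟩

end GaussDiagram

/-- if `G` can be transformed by a finite sequence of crossing changes into a
Gauss diagram `G'` with `W_{G'}(t) = 0`, then
`(1/2)·∑_{k ≠ 0} |J_k(G)| = ∑_{k > 0} |J_k(G)| = ∑_{k < 0} |J_k(G)|`. -/
theorem sum_abs_J_halves {n : ℕ} (G G' : GaussDiagram n)
    (h : ∃ m : ℕ, GaussDiagram.ChangedBy m G G') (h0 : G'.writhePoly = 0) :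
    (∑ᶠ (k : ℤ) (_ : k ≠ 0), |G.J k|) = 2 * ∑ᶠ (k : ℤ) (_ : 0 < k), |G.J k| ∧
      (∑ᶠ (k : ℤ) (_ : 0 < k), |G.J k|) = ∑ᶠ (k : ℤ) (_ : k < 0), |G.J k| := by
  obtain ⟨m, hm⟩ := h
  have heven : Function.Even fun k => |G.J k| := fun k => congrArg abs (hm.J_neg_eq h0 k)
  have hfin : (Function.support fun k => |G.J k|).Finite :=
    (Set.finite_range G.ind).subset
      ((Function.support_comp_subset abs_zero G.J).trans G.support_J_subset_range_ind)
  refine ⟨?_, heven.finsum_neg_eq_finsum_pos.symm⟩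
  rw [heven.finsum_ne_zero_eq_two_nsmul hfin, two_nsmul, two_mul]
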